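/- arXiv:1504.05428 — 2 statements merged into one kernel-verified Lean document; each statement's English description precedes it below -/
import Mathlib

section
/- Let C ∈ ℍ[t] be of positive degree, M a monic quadratic irreducible real polynomial, and suppose right division of C by M gives remainder R ≠ 0 (so deg R ≤ 1) and M divides C·conj(C). Then M = λ·R·conj(R) for some positive real λ, and R is a common left divisor of both M and C. -/
/-!
A real polynomial `M` is central in `ℍ[X]` and fixed by conjugation, so expanding
`C·conj C = (MQ + R)(conj Q·M + conj R)` shows that `M` divides `R·conj R`. Since
`deg (R·conj R) ≤ 2 = deg M`, the quotient is the constant `‖lc R‖² > 0`, i.e.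
`M = λ·R·conj R` with `λ = ‖lc R‖⁻²`. Then `M = R·(λ·conj R)`, so `R` left-divides `M`,
and hence also `C = MQ + R`.
-/

open Polynomial
open scoped Quaternion

/-- Coefficientwise conjugation of a quaternion polynomial. -/
noncomputable def qconj (P : ℍ[ℝ][X]) : ℍ[ℝ][X] :=
  ∑ i ∈ P.support, Polynomial.C (star (P.coeff i)) * Polynomial.X ^ i

namespace Polynomial

theorem commute_map_algebraMap {R A : Type*} [CommSemiring R] [Semiring A] [Algebra R A]
    (m : R[X]) (p : A[X]) : Commute (m.map (algebraMap R A)) p := by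
  induction m using Polynomial.induction_on' with
  | add f g hf hg => rw [Polynomial.map_add]; exact hf.add_left hg
  | monomial n r =>
    rw [map_monomial, ← C_mul_X_pow_eq_monomial, ← Polynomial.algebraMap_apply]
    exact (Algebra.commute_algebraMap_left r p).mul_left (commute_X_pow p n)

theorem eq_mul_C_leadingCoeff_of_dvd {R : Type*} [Semiring R] [Nontrivial R] [NoZeroDivisors R]
    {P A : R[X]} (hP : P.Monic) (hA : A ≠ 0) (hdvd : P ∣ A) (hdeg : A.degree ≤ P.degree) :
    A = P * C A.leadingCoeff := by
  obtain ⟨S, rfl⟩ := hdvd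
  have hS : S ≠ 0 := right_ne_zero_of_mul hA
  have hS0 : S.natDegree = 0 := by
    have := natDegree_le_natDegree hdeg
    rw [natDegree_mul hP.ne_zero hS] at this
    omega
  rw [leadingCoeff_mul, hP.leadingCoeff, one_mul, leadingCoeff, hS0,
    ← eq_C_of_natDegree_eq_zero hS0]

end Polynomial

section qconj

variable (P Q : ℍ[ℝ][X])

@[simp]
theorem coeff_qconj (n : ℕ) : (qconj P).coeff n = star (P.coeff n) := by
  rw [qconj, finsetSum_coeff]
  simp only [coeff_C_mul, coeff_X_pow, mul_ite, mul_one, mul_zero]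
  rw [Finset.sum_ite_eq P.support n (fun i => star (P.coeff i))]
  split_ifs with h
  · rfl
  · rw [notMem_support_iff.mp h, star_zero]

theorem qconj_add : qconj (P + Q) = qconj P + qconj Q :=
  Polynomial.ext fun n => by simp

theorem qconj_mul : qconj (P * Q) = qconj Q * qconj P := by
  refine Polynomial.ext fun n => ?_
  rw [coeff_qconj, coeff_mul, coeff_mul, star_sum,
    ← Finset.Nat.sum_antidiagonal_swap]
  simp

theorem qconj_map_algebraMap (m : ℝ[X]) :
    qconj (m.map (algebraMap ℝ ℍ[ℝ])) = m.map (algebraMap ℝ ℍ[ℝ]) :=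
  Polynomial.ext fun n => by simp [Quaternion.algebraMap_def]

theorem degree_qconj : (qconj P).degree = P.degree := by
  have hsupp : (qconj P).support = P.support := by ext n; simp
  rw [degree, degree, hsupp]

theorem leadingCoeff_qconj : (qconj P).leadingCoeff = star P.leadingCoeff := by
  rw [leadingCoeff, leadingCoeff, natDegree, natDegree, degree_qconj, coeff_qconj]

theorem leadingCoeff_mul_qconj :
    (P * qconj P).leadingCoeff = algebraMap ℝ ℍ[ℝ] (Quaternion.normSq P.leadingCoeff) := by
  rw [leadingCoeff_mul, leadingCoeff_qconj, Quaternion.self_mul_star, Quaternion.algebraMap_def]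

theorem mul_qconj_ne_zero {P : ℍ[ℝ][X]} (hP : P ≠ 0) : P * qconj P ≠ 0 := by
  refine mul_ne_zero hP fun h => hP ?_
  rw [← degree_eq_bot, ← degree_qconj, h, degree_zero]

theorem dvd_remainder_mul_qconj {M : ℝ[X]} {C Q R : ℍ[ℝ][X]}
    (hdivision : C = M.map (algebraMap ℝ ℍ[ℝ]) * Q + R)
    (hdvd : M.map (algebraMap ℝ ℍ[ℝ]) ∣ C * qconj C) :
    M.map (algebraMap ℝ ℍ[ℝ]) ∣ R * qconj R := by
  set m := M.map (algebraMap ℝ ℍ[ℝ])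
  have hcomm : m * (R * qconj Q) = R * qconj Q * m := (commute_map_algebraMap M _).eq
  have hexpand : C * qconj C =
      m * (Q * qconj Q * m + Q * qconj R + R * qconj Q) + R * qconj R := by
    rw [hdivision, qconj_add, qconj_mul, qconj_map_algebraMap, mul_add, mul_add, hcomm]
    noncomm_ring
  rw [hexpand] at hdvd
  exact (dvd_add_right (dvd_mul_right _ _)).mp hdvd

end qconj

theorem remainder_left_divides_general (C : ℍ[ℝ][X]) (M : ℝ[X]) (Q R : ℍ[ℝ][X])
    (hM : M.Monic) (hdeg : M.degree = 2)
    (hdivision : C = M.map (algebraMap ℝ ℍ[ℝ]) * Q + R)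
    (hR : R ≠ 0) (hRdeg : R.degree ≤ 1)
    (hdvd : M.map (algebraMap ℝ ℍ[ℝ]) ∣ C * qconj C) :
    ∃ lam : ℝ, 0 < lam ∧
      M.map (algebraMap ℝ ℍ[ℝ]) =
        Polynomial.C (algebraMap ℝ ℍ[ℝ] lam) * (R * qconj R) ∧
      R ∣ M.map (algebraMap ℝ ℍ[ℝ]) ∧ R ∣ C := by
  set m := M.map (algebraMap ℝ ℍ[ℝ])
  set n := Quaternion.normSq R.leadingCoeff
  have hRR : R * qconj R = m * Polynomial.C (algebraMap ℝ ℍ[ℝ] n) := by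
    rw [← leadingCoeff_mul_qconj]
    refine eq_mul_C_leadingCoeff_of_dvd (hM.map _) (mul_qconj_ne_zero hR)
      (dvd_remainder_mul_qconj hdivision hdvd) ?_
    rw [degree_mul, degree_qconj, degree_map_eq_of_injective Quaternion.algebraMap_injective, hdeg]
    exact (add_le_add hRdeg hRdeg).trans_eq one_add_one_eq_two
  have hn : 0 < n := Quaternion.normSq_nonneg.lt_of_ne'
    (Quaternion.normSq_ne_zero.mpr (leadingCoeff_ne_zero.mpr hR))
  have hm : m = Polynomial.C (algebraMap ℝ ℍ[ℝ] n⁻¹) * (R * qconj R) := by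
    rw [hRR, ← Polynomial.algebraMap_apply, ← Polynomial.algebraMap_apply,
      ← Algebra.commutes n m, ← mul_assoc, ← map_mul,
      inv_mul_cancel₀ hn.ne', map_one, one_mul]
  have hRm : m = R * (Polynomial.C (algebraMap ℝ ℍ[ℝ] n⁻¹) * qconj R) := by
    rw [hm, ← Polynomial.algebraMap_apply, ← mul_assoc, ← mul_assoc, Algebra.commutes]
  exact ⟨n⁻¹, inv_pos.mpr hn, hm, ⟨_, hRm⟩,
    ⟨_, by rw [hdivision, hRm, mul_assoc, ← mul_add_one]⟩⟩

/-- If right division of `C` by a monic quadratic irreducible real polynomial `M`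
dividing `C ⬝ conj C` leaves a nonzero remainder `R`, then `M` is a positive real
multiple of `R ⬝ conj R` and `R` is a common left divisor of `M` and `C`. -/
theorem remainder_left_divides (C : ℍ[ℝ][X]) (M : ℝ[X]) (Q R : ℍ[ℝ][X])
    (hC : 0 < C.degree)
    (hM : M.Monic) (hdeg : M.degree = 2) (hirr : Irreducible M)
    (hdivision : C = M.map (algebraMap ℝ ℍ[ℝ]) * Q + R)
    (hR : R ≠ 0) (hRdeg : R.degree ≤ 1)
    (hdvd : M.map (algebraMap ℝ ℍ[ℝ]) ∣ C * qconj C) :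
    ∃ lam : ℝ, 0 < lam ∧
      M.map (algebraMap ℝ ℍ[ℝ]) =
        Polynomial.C (algebraMap ℝ ℍ[ℝ] lam) * (R * qconj R) ∧
      R ∣ M.map (algebraMap ℝ ℍ[ℝ]) ∧ R ∣ C :=
  remainder_left_divides_general C M Q R hM hdeg hdivision hR hRdeg hdvd
end

section
/- Let P ∈ ℍ[t] be a quaternion polynomial with no nonconstant real polynomial factor, and suppose the real polynomial P·conj(P)·M divides a real polynomial S, where M ∈ ℝ[t]. If conj(P)·S' = conj(P)·P·P₁ for quaternion polynomials with S' real, where conj(P) has no real factor, then P·conj(P) divides S'. -/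
open Polynomial
open scoped Quaternion

/-!
Cancelling `conj P` gives `S' = P P₁`. The norm polynomial `N = P conj P` is real, so
`g = gcd(S', N)` is a real combination of `S'` and `N`, hence left divisible by `P`:
`g = P u`. Writing `N = g c` and cancelling `P` gives `conj P = u c`; the real factor `c`
is central, so it divides `conj P` and must be constant. Thus `N ∣ g ∣ S'`.
-/

namespace Polynomial

section BaseFieldFactors

variable {K A : Type*} [Field K] [Ring A] [Algebra K A]

theorem commute_map_algebraMap_s15 (r : K[X]) (q : A[X]) :
    Commute (r.map (algebraMap K A)) q := by
  induction r using Polynomial.induction_on' with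
  | add p p' hp hp' => rw [Polynomial.map_add]; exact hp.add_left hp'
  | monomial k a =>
    rw [map_monomial, ← C_mul_X_pow_eq_monomial, ← algebraMap_apply]
    exact (Algebra.commute_algebraMap_left a q).mul_left (commute_X_pow q k)

theorem ne_zero_of_forall_not_map_dvd {Q : A[X]}
    (hQ : ∀ r : K[X], 0 < r.degree → ¬ r.map (algebraMap K A) ∣ Q) : Q ≠ 0 := by
  rintro rfl
  exact hQ X (by rw [degree_X]; exact zero_lt_one) (dvd_zero _)

theorem isUnit_of_map_dvd {Q : A[X]}
    (hQ : ∀ r : K[X], 0 < r.degree → ¬ r.map (algebraMap K A) ∣ Q) {c : K[X]}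
    (hc : c.map (algebraMap K A) ∣ Q) : IsUnit c := by
  have hc0 : c ≠ 0 := by
    rintro rfl
    rw [Polynomial.map_zero, zero_dvd_iff] at hc
    exact ne_zero_of_forall_not_map_dvd hQ hc
  rw [isUnit_iff_degree_eq_zero]
  exact le_antisymm (not_lt.mp fun hd => hQ c hd hc) (zero_le_degree_iff.mpr hc0)

variable [IsDomain A]

theorem dvd_of_map_eq_mul_of_dvd_map {n s : K[X]} {P Q : A[X]}
    (hQ : ∀ r : K[X], 0 < r.degree → ¬ r.map (algebraMap K A) ∣ Q)
    (hn : n.map (algebraMap K A) = P * Q) (hs : P ∣ s.map (algebraMap K A)) : n ∣ s := by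
  classical
  rcases eq_or_ne P 0 with rfl | hP
  · rw [zero_dvd_iff, Polynomial.map_eq_zero_iff (algebraMap K A).injective] at hs
    exact hs ▸ dvd_zero n
  set g := EuclideanDomain.gcd s n
  obtain ⟨u, hu⟩ : P ∣ g.map (algebraMap K A) := by
    rw [show g = _ from EuclideanDomain.gcd_eq_gcd_ab s n, Polynomial.map_add,
      Polynomial.map_mul, Polynomial.map_mul, hn, mul_assoc]
    exact dvd_add (hs.mul_right _) (dvd_mul_right _ _)
  obtain ⟨c, hc⟩ : g ∣ n := EuclideanDomain.gcd_dvd_right s n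
  have hQ_eq : Q = u * c.map (algebraMap K A) := by
    apply mul_left_cancel₀ hP
    rw [← hn, ← mul_assoc, ← hu, ← Polynomial.map_mul, ← hc]
  have hc_unit : IsUnit c :=
    isUnit_of_map_dvd hQ ⟨u, hQ_eq.trans (commute_map_algebraMap_s15 c u).symm.eq⟩
  calc n = g * c := hc
    _ ∣ g := hc_unit.mul_right_dvd.mpr dvd_rfl
    _ ∣ s := EuclideanDomain.gcd_dvd_left s n

end BaseFieldFactors

end Polynomial

theorem qconj_coeff (P : ℍ[ℝ][X]) (n : ℕ) : (qconj P).coeff n = star (P.coeff n) := by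
  simp +contextual [qconj, finsetSum_coeff, coeff_C_mul, coeff_X_pow]

theorem qconj_mul_s15 (A B : ℍ[ℝ][X]) : qconj (A * B) = qconj B * qconj A := by
  ext n : 1
  rw [qconj_coeff, coeff_mul, coeff_mul, star_sum]
  conv_rhs => rw [← Finset.HasAntidiagonal.map_swap_antidiagonal, Finset.sum_map]
  simp [qconj_coeff, star_mul]

theorem qconj_qconj (A : ℍ[ℝ][X]) : qconj (qconj A) = A := by
  ext n : 1
  simp [qconj_coeff]

theorem exists_map_eq_of_qconj_eq {Q : ℍ[ℝ][X]} (hQ : qconj Q = Q) :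
    ∃ n : ℝ[X], n.map (algebraMap ℝ ℍ[ℝ]) = Q := by
  refine (mem_map_range (algebraMap ℝ ℍ[ℝ])).mpr fun k => ⟨(Q.coeff k).re, ?_⟩
  have hk : star (Q.coeff k) = Q.coeff k := by rw [← qconj_coeff, hQ]
  exact (Quaternion.star_eq_self.mp hk).symm

theorem real_divisibility_transfer_general (P P₁ : ℍ[ℝ][X]) (S' : ℝ[X])
    (hPc : ∀ r : ℝ[X], 0 < r.degree → ¬ r.map (algebraMap ℝ ℍ[ℝ]) ∣ qconj P)
    (h : qconj P * S'.map (algebraMap ℝ ℍ[ℝ]) = qconj P * P * P₁) :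
    P * qconj P ∣ S'.map (algebraMap ℝ ℍ[ℝ]) := by
  have hS' : S'.map (algebraMap ℝ ℍ[ℝ]) = P * P₁ :=
    mul_left_cancel₀ (ne_zero_of_forall_not_map_dvd hPc) (by rw [h, mul_assoc])
  obtain ⟨n, hn⟩ : ∃ n : ℝ[X], n.map (algebraMap ℝ ℍ[ℝ]) = P * qconj P :=
    exists_map_eq_of_qconj_eq (by rw [qconj_mul_s15, qconj_qconj])
  exact hn ▸ Polynomial.map_dvd _ (dvd_of_map_eq_mul_of_dvd_map hPc hn ⟨P₁, hS'⟩)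

/-- Auxiliary step in Lemma 3 of the paper: if `P` has no nonconstant real
polynomial factor, `P conj P ⬝ M` divides the real polynomial `S`, and
`conj P ⬝ S' = conj P ⬝ P ⬝ P₁` with `S'` real, then `P conj P` divides `S'`. -/
theorem real_divisibility_transfer (P P₁ : ℍ[ℝ][X]) (M S S' : ℝ[X])
    (hP : ∀ r : ℝ[X], 0 < r.degree → ¬ r.map (algebraMap ℝ ℍ[ℝ]) ∣ P)
    (hPc : ∀ r : ℝ[X], 0 < r.degree → ¬ r.map (algebraMap ℝ ℍ[ℝ]) ∣ qconj P)
    (hMS : P * qconj P * M.map (algebraMap ℝ ℍ[ℝ]) ∣ S.map (algebraMap ℝ ℍ[ℝ]))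
    (h : qconj P * S'.map (algebraMap ℝ ℍ[ℝ]) = qconj P * P * P₁) :
    P * qconj P ∣ S'.map (algebraMap ℝ ℍ[ℝ]) :=
  real_divisibility_transfer_general P P₁ S' hPc h
end
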